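/- Let k = (k₀, k_p, …, k_{Mp}) and l = (l₀, l_p, …, l_{Np}) be two tuples of elements of K with associated endomorphisms α_k and α_l of A₁ and hom-associative Weyl algebras A₁ᵏ and A₁ˡ. A nonzero K-linear map f : A₁ → A₁ is a homomorphism from A₁ᵏ to A₁ˡ, i.e. f(α_k(a·b)) = α_l(f(a)·f(b)) for all a,b ∈ A₁ and f ∘ α_k = α_l ∘ f, if and only if f is a unital K-algebra endomorphism of A₁ satisfying f(x) = α_l(f(x)) and k₀ + f(y) + k_p f(y)^p + k_{2p} f(y)^{2p} + ⋯ + k_{Mp} f(y)^{Mp} = α_l(f(y)). -/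

import Mathlib

/-!
Because `α_l` fixes `x` and sends `y` to a nonconstant polynomial `h(y)`, it is injective: on
normal forms `∑ c_{mn} yᵐ xⁿ ↦ ∑ c_{mn} vⁿ uᵐ ∈ K[v][u]` it acts as the substitution `u ↦ h(u)`.
Hence the two conditions on `f` say exactly that `f` is multiplicative and intertwines `α_k` with
`α_l`. A nonzero multiplicative map is unital because `A₁` is a domain (left multiplication by `a`
multiplies leading `u`-coefficients of normal forms by that of `a`), and an algebra endomorphism
intertwines `α_k` with `α_l` as soon as it does so on the generators `x` and `y`.
-/

noncomputable section

/-- The defining relation of the first Weyl algebra: `x * y = y * x + 1`. -/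
inductive WeylRel (K : Type*) [Field K] :
    FreeAlgebra K (Fin 2) → FreeAlgebra K (Fin 2) → Prop
  | comm : WeylRel K (FreeAlgebra.ι K 0 * FreeAlgebra.ι K 1)
      (FreeAlgebra.ι K 1 * FreeAlgebra.ι K 0 + 1)

/-- The first Weyl algebra `A₁` over `K`: the free unital associative `K`-algebra on two
generators `x, y` modulo the relation `x·y − y·x = 1`. -/
abbrev Weyl (K : Type*) [Field K] := RingQuot (WeylRel K)

/-- The generator `x` of the first Weyl algebra. -/
def Wx (K : Type*) [Field K] : Weyl K :=
  RingQuot.mkAlgHom K (WeylRel K) (FreeAlgebra.ι K 0)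

/-- The generator `y` of the first Weyl algebra. -/
def Wy (K : Type*) [Field K] : Weyl K :=
  RingQuot.mkAlgHom K (WeylRel K) (FreeAlgebra.ι K 1)

theorem map_one_eq_one_of_map_mul {M₀ : Type*} [MonoidWithZero M₀] [IsLeftCancelMulZero M₀]
    {f : M₀ → M₀} (hf : f ≠ 0) (hmul : ∀ a b, f (a * b) = f a * f b) : f 1 = 1 := by
  have hidem : IsIdempotentElem (f 1) := by rw [IsIdempotentElem, ← hmul, one_mul]
  refine (IsIdempotentElem.iff_eq_zero_or_one.mp hidem).resolve_left fun h1 => hf ?_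
  funext a
  rw [Pi.zero_apply, ← mul_one a, hmul, h1, mul_zero]

theorem homAssocHom_iff_of_injective {M₀ : Type*} [MonoidWithZero M₀] [IsLeftCancelMulZero M₀]
    {f αk αl : M₀ → M₀} (hf : f ≠ 0) (hαl : Function.Injective αl) :
    ((∀ a b, f (αk (a * b)) = αl (f a * f b)) ∧ ∀ a, f (αk a) = αl (f a)) ↔
      ((∀ a b, f (a * b) = f a * f b) ∧ f 1 = 1) ∧ ∀ a, f (αk a) = αl (f a) := by
  refine ⟨fun ⟨hαk, hcomm⟩ => ?_, fun ⟨⟨hmul, _⟩, hcomm⟩ =>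
    ⟨fun a b => by rw [hcomm, hmul], hcomm⟩⟩
  have hmul : ∀ a b, f (a * b) = f a * f b := fun a b => hαl (by rw [← hcomm, hαk])
  exact ⟨⟨hmul, map_one_eq_one_of_map_mul hf hmul⟩, hcomm⟩

namespace Polynomial

theorem natDegree_X_add_sum_smul_X_pow_ne_zero {R : Type*} [Semiring R] [Nontrivial R]
    {p : ℕ} (hp : p ≠ 1) (s : Finset ℕ) (l : ℕ → R) :
    (X + ∑ i ∈ s, l i • X ^ (i * p) : R[X]).natDegree ≠ 0 := by
  refine fun h0 => one_ne_zero (α := R) ?_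
  have hcoeff := coeff_eq_zero_of_natDegree_lt (p := X + ∑ i ∈ s, l i • X ^ (i * p)) (n := 1)
    (by omega)
  rwa [coeff_add, coeff_X_one, finsetSum_coeff, Finset.sum_eq_zero, add_zero] at hcoeff
  intro i _
  rw [coeff_smul, coeff_X_pow, if_neg (fun h => hp (mul_eq_one.mp h.symm).2), smul_zero]

end Polynomial

namespace Weyl

open Polynomial

variable {K : Type*} [Field K]

theorem Wx_mul_Wy : Wx K * Wy K = Wy K * Wx K + 1 := by
  simpa only [map_mul, map_add, map_one, Wx, Wy] using
    RingQuot.mkAlgHom_rel K (WeylRel.comm (K := K))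

theorem Wx_mul_Wy_pow (m : ℕ) :
    Wx K * Wy K ^ m = Wy K ^ m * Wx K + (m : K) • Wy K ^ (m - 1) := by
  induction m with
  | zero => simp
  | succ m ih =>
    rw [pow_succ, ← mul_assoc, ih, add_mul, smul_mul_assoc, mul_assoc, Wx_mul_Wy, mul_add,
      mul_one, ← pow_succ]
    rcases m with - | m
    · simp
    · rw [Nat.add_sub_cancel, Nat.add_sub_cancel, ← pow_succ, ← mul_assoc, ← pow_succ]
      push_cast
      module

theorem adjoin_Wx_Wy_eq_top : Algebra.adjoin K {Wx K, Wy K} = ⊤ := by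
  have hrange : Set.range (FreeAlgebra.ι K : Fin 2 → FreeAlgebra K (Fin 2)) =
      {FreeAlgebra.ι K 0, FreeAlgebra.ι K 1} := by
    ext; simp [Fin.exists_fin_two, eq_comm]
  rw [Wx, Wy, ← Set.image_pair, ← hrange, ← AlgHom.map_adjoin, FreeAlgebra.adjoin_range_ι,
    Algebra.map_top, AlgHom.range_eq_top]
  exact RingQuot.mkAlgHom_surjective K (WeylRel K)

theorem induction_on {motive : Weyl K → Prop} (a : Weyl K) (x : motive (Wx K))
    (y : motive (Wy K)) (algebraMap : ∀ c : K, motive (algebraMap K (Weyl K) c))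
    (add : ∀ a b, motive a → motive b → motive (a + b))
    (mul : ∀ a b, motive a → motive b → motive (a * b)) : motive a := by
  have ha : a ∈ Algebra.adjoin K {Wx K, Wy K} := by
    simp [adjoin_Wx_Wy_eq_top]
  induction ha using Algebra.adjoin_induction with
  | mem b hb => rcases hb with rfl | rfl <;> assumption
  | algebraMap c => exact algebraMap c
  | add a b _ _ ha hb => exact add a b ha hb
  | mul a b _ _ ha hb => exact mul a b ha hb

theorem algHom_ext_iff {A : Type*} [Semiring A] [Algebra K A] {f g : Weyl K →ₐ[K] A} :
    f = g ↔ f (Wx K) = g (Wx K) ∧ f (Wy K) = g (Wy K) := by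
  refine ⟨fun h => h ▸ ⟨rfl, rfl⟩, fun ⟨hx, hy⟩ => ?_⟩
  refine AlgHom.ext_of_adjoin_eq_top adjoin_Wx_Wy_eq_top ?_
  rintro _ (rfl | rfl) <;> assumption

def lift {A : Type*} [Semiring A] [Algebra K A] (a b : A) (h : a * b = b * a + 1) :
    Weyl K →ₐ[K] A :=
  RingQuot.liftAlgHom K ⟨FreeAlgebra.lift K ![a, b], by
    rintro _ _ ⟨⟩
    simpa using h⟩

section lift

variable {A : Type*} [Semiring A] [Algebra K A] (a b : A) (h : a * b = b * a + 1)

@[simp]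
theorem lift_Wx : lift a b h (Wx K) = a := by
  simp [lift, Wx]

@[simp]
theorem lift_Wy : lift a b h (Wy K) = b := by
  simp [lift, Wy]

end lift

/- `K[X][X]` is `K[v][u]`, with `vⁿ uᵐ` standing for the normal-ordered monomial `yᵐ xⁿ`.
Since `x yᵐ xⁿ = yᵐ xⁿ⁺¹ + m yᵐ⁻¹ xⁿ`, left multiplication by `x` becomes `∂/∂u + v` and left
multiplication by `y` becomes multiplication by `u`; `rep` is this left regular representation. -/
def xOp : Module.End K[X] K[X][X] := derivative + LinearMap.mulLeft K[X] (C X)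

def yOp : Module.End K[X] K[X][X] := LinearMap.mulLeft K[X] X

theorem xOp_mul_yOp : xOp * yOp = yOp * xOp + (1 : Module.End K[X] K[X][X]) := by
  refine LinearMap.ext fun g => ?_
  simp only [xOp, yOp, Module.End.mul_apply, LinearMap.add_apply, LinearMap.mulLeft_apply,
    Module.End.one_apply, derivative_mul, derivative_X, one_mul]
  ring

def rep : Weyl K →ₐ[K] Module.End K[X] K[X][X] := lift xOp yOp xOp_mul_yOp

@[simp]
theorem rep_Wx : rep (Wx K) = xOp := lift_Wx _ _ _

@[simp]
theorem rep_Wy : rep (Wy K) = yOp := lift_Wy _ _ _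

def normalForm (a : Weyl K) : K[X][X] := rep a 1

def ofNormalForm : K[X][X] →ₗ[K] Weyl K :=
  lsum fun m => LinearMap.mulLeft K (Wy K ^ m) ∘ₗ (aeval (Wx K)).toLinearMap

theorem ofNormalForm_monomial (m : ℕ) (r : K[X]) :
    ofNormalForm (monomial m r) = Wy K ^ m * aeval (Wx K) r := by
  simp [ofNormalForm]

theorem ofNormalForm_yOp (g : K[X][X]) : ofNormalForm (yOp g) = Wy K * ofNormalForm g := by
  induction g using Polynomial.induction_on' with
  | add g h hg hh => simp only [map_add, hg, hh, mul_add]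
  | monomial m r =>
    rw [yOp, LinearMap.mulLeft_apply, X_mul_monomial, ofNormalForm_monomial,
      ofNormalForm_monomial, pow_succ', mul_assoc]

theorem ofNormalForm_xOp (g : K[X][X]) : ofNormalForm (xOp g) = Wx K * ofNormalForm g := by
  induction g using Polynomial.induction_on' with
  | add g h hg hh => simp only [map_add, hg, hh, mul_add]
  | monomial m r =>
    rw [ofNormalForm_monomial, ← mul_assoc, Wx_mul_Wy_pow, xOp, LinearMap.add_apply,
      LinearMap.mulLeft_apply, derivative_monomial, C_mul_monomial, map_add,
      ofNormalForm_monomial, ofNormalForm_monomial, map_mul, map_mul, aeval_X, map_natCast,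
      ← Nat.cast_comm, Nat.cast_smul_eq_nsmul, nsmul_eq_mul, add_mul, add_comm,
      (Nat.cast_commute m (Wy K ^ (m - 1))).eq, mul_assoc, mul_assoc]

theorem ofNormalForm_rep (a : Weyl K) (g : K[X][X]) :
    ofNormalForm (rep a g) = a * ofNormalForm g := by
  induction a using induction_on generalizing g with
  | x => simp [ofNormalForm_xOp]
  | y => simp [ofNormalForm_yOp]
  | algebraMap c =>
    rw [AlgHom.commutes, Module.algebraMap_end_apply, map_smul, Algebra.smul_def]
  | add a b ha hb => simp [ha, hb, add_mul]
  | mul a b ha hb => simp [ha, hb, mul_assoc]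

theorem ofNormalForm_one : ofNormalForm (1 : K[X][X]) = 1 := by
  simpa using ofNormalForm_monomial (K := K) 0 1

theorem ofNormalForm_normalForm (a : Weyl K) : ofNormalForm (normalForm a) = a := by
  rw [normalForm, ofNormalForm_rep, ofNormalForm_one, mul_one]

theorem normalForm_injective : Function.Injective (normalForm (K := K)) :=
  Function.LeftInverse.injective ofNormalForm_normalForm

theorem normalForm_zero : normalForm (0 : Weyl K) = 0 := by
  simp [normalForm]

theorem normalForm_add (a b : Weyl K) : normalForm (a + b) = normalForm a + normalForm b := by
  simp [normalForm]

theorem normalForm_mul (a b : Weyl K) : normalForm (a * b) = rep a (normalForm b) := by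
  rw [normalForm, normalForm, map_mul, Module.End.mul_apply]

theorem rep_ofNormalForm_monomial (m : ℕ) (r : K[X]) (g : K[X][X]) :
    rep (ofNormalForm (monomial m r)) g = X ^ m * aeval xOp r g := by
  rw [ofNormalForm_monomial, map_mul, map_pow, ← aeval_algHom_apply, rep_Wx, rep_Wy, yOp,
    LinearMap.pow_mulLeft, Module.End.mul_apply, LinearMap.mulLeft_apply]

section degree

variable {g : K[X][X]} {e : ℕ}

theorem natDegree_xOp_le (hg : g.natDegree ≤ e) : (xOp g).natDegree ≤ e :=
  (natDegree_add_le _ _).trans <| max_le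
    ((natDegree_derivative_le g).trans <| (Nat.sub_le _ _).trans hg)
    ((natDegree_C_mul_le _ _).trans hg)

theorem coeff_xOp (hg : g.natDegree ≤ e) : (xOp g).coeff e = X * g.coeff e := by
  rw [xOp, LinearMap.add_apply, LinearMap.mulLeft_apply, coeff_add, coeff_derivative,
    coeff_C_mul, coeff_eq_zero_of_natDegree_lt (hg.trans_lt e.lt_succ_self), zero_mul, zero_add]

theorem natDegree_aeval_xOp_le (r : K[X]) (hg : g.natDegree ≤ e) :
    (aeval xOp r g).natDegree ≤ e := by
  induction r using Polynomial.induction_on generalizing g with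
  | C c =>
    rw [aeval_C, Module.algebraMap_end_apply]
    exact (natDegree_smul_le _ _).trans hg
  | add r s hr hs =>
    rw [map_add, LinearMap.add_apply]
    exact (natDegree_add_le _ _).trans (max_le (hr hg) (hs hg))
  | monomial n c ih =>
    rw [pow_succ, ← mul_assoc, map_mul, aeval_X, Module.End.mul_apply]
    exact ih (natDegree_xOp_le hg)

theorem coeff_aeval_xOp (r : K[X]) (hg : g.natDegree ≤ e) :
    (aeval xOp r g).coeff e = r * g.coeff e := by
  induction r using Polynomial.induction_on generalizing g with
  | C c =>
    rw [aeval_C, Module.algebraMap_end_apply, coeff_smul, Polynomial.smul_eq_C_mul]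
  | add r s hr hs =>
    rw [map_add, LinearMap.add_apply, coeff_add, hr hg, hs hg, add_mul]
  | monomial n c ih =>
    rw [pow_succ, ← mul_assoc, map_mul, aeval_X, Module.End.mul_apply, ih (natDegree_xOp_le hg),
      coeff_xOp hg]
    ring

theorem coeff_rep_ofNormalForm {t : K[X][X]} {d : ℕ} (ht : t.natDegree ≤ d)
    (hg : g.natDegree ≤ e) :
    (rep (ofNormalForm t) g).coeff (d + e) = t.coeff d * g.coeff e := by
  refine induction_with_natDegree_le
    (fun t => (rep (ofNormalForm t) g).coeff (d + e) = t.coeff d * g.coeff e) d (by simp)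
    (fun n r _ hn => ?_) (fun t s _ _ ht hs => ?_) t ht
  · rw [C_mul_X_pow_eq_monomial, rep_ofNormalForm_monomial, coeff_X_pow_mul', if_pos (by omega),
      coeff_monomial]
    rcases hn.eq_or_lt with rfl | hlt
    · rw [Nat.add_sub_cancel_left, coeff_aeval_xOp r hg, if_pos rfl]
    · rw [coeff_eq_zero_of_natDegree_lt ((natDegree_aeval_xOp_le r hg).trans_lt (by omega)),
        if_neg hlt.ne, zero_mul]
  · rw [map_add, map_add, LinearMap.add_apply, coeff_add, ht, hs, coeff_add, add_mul]

end degree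

theorem coeff_normalForm_mul (a b : Weyl K) :
    (normalForm (a * b)).coeff ((normalForm a).natDegree + (normalForm b).natDegree) =
      (normalForm a).leadingCoeff * (normalForm b).leadingCoeff := by
  have h := coeff_rep_ofNormalForm (t := normalForm a) (g := normalForm b) le_rfl le_rfl
  rwa [ofNormalForm_normalForm, ← normalForm_mul] at h

theorem normalForm_eq_zero_iff {a : Weyl K} : normalForm a = 0 ↔ a = 0 :=
  normalForm_injective.eq_iff' normalForm_zero

instance : NoZeroDivisors (Weyl K) where
  eq_zero_or_eq_zero_of_mul_eq_zero {a b} hab := by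
    have h := coeff_normalForm_mul a b
    rwa [hab, normalForm_zero, coeff_zero, eq_comm, mul_eq_zero, leadingCoeff_eq_zero,
      leadingCoeff_eq_zero, normalForm_eq_zero_iff, normalForm_eq_zero_iff] at h

theorem aeval_yOp_apply (h : K[X]) (g : K[X][X]) : aeval yOp h g = h.map C * g := by
  induction h using Polynomial.induction_on generalizing g with
  | C c => simp [Module.algebraMap_end_apply, Algebra.smul_def]
  | add h h' hh hh' => simp [hh, hh', add_mul]
  | monomial n c ih =>
    rw [pow_succ, ← mul_assoc, map_mul, aeval_X, Module.End.mul_apply, ih, yOp,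
      LinearMap.mulLeft_apply, Polynomial.map_mul (p := C c * X ^ n), Polynomial.map_X, mul_assoc]

theorem aeval_xOp_C (r s : K[X]) : aeval xOp r (C s) = C (r * s) := by
  induction r using Polynomial.induction_on generalizing s with
  | C c => simp [Module.algebraMap_end_apply, Algebra.smul_def]
  | add r r' hr hr' => simp [hr, hr', add_mul]
  | monomial n c ih =>
    have hxOp : xOp (C s) = C (X * s) := by
      rw [xOp, LinearMap.add_apply, LinearMap.mulLeft_apply, derivative_C, zero_add, C_mul]
    rw [pow_succ, ← mul_assoc, map_mul, aeval_X, Module.End.mul_apply, hxOp, ih,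
      mul_assoc (C c * X ^ n)]

theorem normalForm_map_ofNormalForm {α : Weyl K →ₐ[K] Weyl K} (hx : α (Wx K) = Wx K)
    {h : K[X]} (hy : α (Wy K) = aeval (Wy K) h) (t : K[X][X]) :
    normalForm (α (ofNormalForm t)) = t.comp (h.map C) := by
  induction t using Polynomial.induction_on' with
  | add t s ht hs => rw [map_add, map_add, normalForm_add, ht, hs, add_comp]
  | monomial n r =>
    rw [ofNormalForm_monomial, map_mul, map_pow, hy, ← aeval_algHom_apply, hx, ← map_pow,
      normalForm_mul, normalForm, ← aeval_algHom_apply, ← aeval_algHom_apply, rep_Wx, rep_Wy,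
      ← C_1, aeval_xOp_C, aeval_yOp_apply, monomial_comp, Polynomial.map_pow, mul_one, mul_comm]

theorem injective_of_map_Wx_of_map_Wy {α : Weyl K →ₐ[K] Weyl K} (hx : α (Wx K) = Wx K)
    {h : K[X]} (hy : α (Wy K) = aeval (Wy K) h) (hh : h.natDegree ≠ 0) :
    Function.Injective α := by
  refine (injective_iff_map_eq_zero α).mpr fun a ha => ?_
  have hcomp := normalForm_map_ofNormalForm hx hy (normalForm a)
  rw [ofNormalForm_normalForm, ha, normalForm_zero, eq_comm, comp_eq_zero_iff] at hcomp
  rcases hcomp with h0 | ⟨-, hconst⟩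
  · exact normalForm_eq_zero_iff.mp h0
  · refine absurd (congrArg natDegree hconst) ?_
    rwa [natDegree_C, natDegree_map_eq_of_injective C_injective]

end Weyl

theorem homWeyl_hom_iff_general (K : Type*) [Field K] (p : ℕ) (hp : p.Prime)
    (M N : ℕ) (k l : ℕ → K) (αk αl : Weyl K →ₐ[K] Weyl K)
    (hkx : αk (Wx K) = Wx K)
    (hky : αk (Wy K) = Wy K + ∑ i ∈ Finset.range (M + 1), k i • (Wy K) ^ (i * p))
    (hlx : αl (Wx K) = Wx K)
    (hly : αl (Wy K) = Wy K + ∑ i ∈ Finset.range (N + 1), l i • (Wy K) ^ (i * p))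
    (f : Weyl K →ₗ[K] Weyl K) (hf : f ≠ 0) :
    ((∀ a b : Weyl K, f (αk (a * b)) = αl (f a * f b)) ∧
      (∀ a : Weyl K, f (αk a) = αl (f a))) ↔
    ((∀ a b : Weyl K, f (a * b) = f a * f b) ∧ f 1 = 1 ∧
      f (Wx K) = αl (f (Wx K)) ∧
      f (Wy K) + ∑ i ∈ Finset.range (M + 1), k i • (f (Wy K)) ^ (i * p)
        = αl (f (Wy K))) := by
  have hαl : Function.Injective αl :=
    Weyl.injective_of_map_Wx_of_map_Wy hlx (by simp [hly])
      (Polynomial.natDegree_X_add_sum_smul_X_pow_ne_zero hp.ne_one (Finset.range (N + 1)) l)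
  rw [homAssocHom_iff_of_injective (fun h => hf (LinearMap.ext (congrFun h))) hαl, and_assoc]
  refine and_congr_right fun hmul => and_congr_right fun hone => ?_
  let F := AlgHom.ofLinearMap f hone hmul
  calc (∀ a, f (αk a) = αl (f a)) ↔ F.comp αk = αl.comp F := by
        rw [AlgHom.ext_iff]
        rfl
    _ ↔ _ := by
        rw [Weyl.algHom_ext_iff]
        simp only [AlgHom.comp_apply, hkx, hky, map_add, map_sum, map_smul, map_pow]
        rfl

/-- A nonzero `K`-linear map `f : A₁ → A₁` is a homomorphism from the hom-associative Weyl
algebra `A₁ᵏ` to `A₁ˡ` (i.e. `f (α_k (a·b)) = α_l (f a · f b)` for all `a,b` and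
`f ∘ α_k = α_l ∘ f`) if and only if `f` is a unital `K`-algebra endomorphism of `A₁`
satisfying `f x = α_l (f x)` and
`k₀ + f y + k_p (f y)^p + ⋯ + k_{Mp} (f y)^{Mp} = α_l (f y)`. -/
theorem homWeyl_hom_iff (K : Type*) [Field K] (p : ℕ) (hp : p.Prime) [CharP K p]
    (M N : ℕ) (k l : ℕ → K) (αk αl : Weyl K →ₐ[K] Weyl K)
    (hkx : αk (Wx K) = Wx K)
    (hky : αk (Wy K) = Wy K + ∑ i ∈ Finset.range (M + 1), k i • (Wy K) ^ (i * p))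
    (hlx : αl (Wx K) = Wx K)
    (hly : αl (Wy K) = Wy K + ∑ i ∈ Finset.range (N + 1), l i • (Wy K) ^ (i * p))
    (f : Weyl K →ₗ[K] Weyl K) (hf : f ≠ 0) :
    ((∀ a b : Weyl K, f (αk (a * b)) = αl (f a * f b)) ∧
      (∀ a : Weyl K, f (αk a) = αl (f a))) ↔
    ((∀ a b : Weyl K, f (a * b) = f a * f b) ∧ f 1 = 1 ∧
      f (Wx K) = αl (f (Wx K)) ∧
      f (Wy K) + ∑ i ∈ Finset.range (M + 1), k i • (f (Wy K)) ^ (i * p)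
        = αl (f (Wy K))) :=
  homWeyl_hom_iff_general K p hp M N k l αk αl hkx hky hlx hly f hf
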